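/- The fiber over the basepoint x of the fibration E(X,x)_j → X, where E(X,x)_j = X^I ∪_{P_x X} (P_x X × S^j) with the map given by evaluation of a path at its endpoint, is homotopy equivalent to the smash product (Ω_x X)_+ ∧ S^j, where Ω_x X is the based loop space of X at x. -/

import Mathlib

noncomputable section

section Glue
variable {A : Type} {X : Type} {Y : Type} [TopologicalSpace A] [TopologicalSpace X] [TopologicalSpace Y]

/-- The relation generating the adjunction space `X ∪_A Y`. -/
inductive GlueRel (f : A → X) (g : A → Y) : X ⊕ Y → X ⊕ Y → Prop
  | rel (a : A) : GlueRel f g (Sum.inl (f a)) (Sum.inr (g a))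

/-- The adjunction space (pushout) `X ∪_A Y` of `f : A → X`, `g : A → Y`. -/
def Glue (f : A → X) (g : A → Y) : Type := Quot (GlueRel f g)

instance (f : A → X) (g : A → Y) : TopologicalSpace (Glue f g) := by
  unfold Glue; infer_instance

def Glue.inl (f : A → X) (g : A → Y) : X → Glue f g := fun x => Quot.mk _ (Sum.inl x)
def Glue.inr (f : A → X) (g : A → Y) : Y → Glue f g := fun y => Quot.mk _ (Sum.inr y)

/-- Universal property of the adjunction space. -/
def Glue.desc {Z : Type} (f : A → X) (g : A → Y) (h : X → Z) (k : Y → Z)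
    (hc : ∀ a, h (f a) = k (g a)) : Glue f g → Z :=
  Quot.lift (Sum.elim h k) (by rintro _ _ ⟨a⟩; exact hc a)

end Glue

/-- Collapse a subset of `X` to a (disjointly added) basepoint. -/
def Collapse {X : Type} [TopologicalSpace X] (s : Set X) : Type :=
  Glue (fun a : s => (a : X)) (fun _ : s => (PUnit.unit : PUnit))

instance {X : Type} [TopologicalSpace X] (s : Set X) : TopologicalSpace (Collapse s) := by
  unfold Collapse; infer_instance

/-- The `j`-sphere. -/
def Sph (j : ℕ) : Type := Metric.sphere (0 : EuclideanSpace ℝ (Fin (j+1))) 1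
instance (j : ℕ) : TopologicalSpace (Sph j) := by unfold Sph; infer_instance

/-- The basepoint of the `j`-sphere. -/
def Sph.pt (j : ℕ) : Sph j := ⟨EuclideanSpace.single 0 1, by simp [EuclideanSpace.norm_single]⟩

variable (X : Type) [TopologicalSpace X] (x : X) (j : ℕ)

/-- The space of paths `[0,1] → X` starting at `x`. -/
def PathsFrom : Type := {γ : C(unitInterval, X) // γ 0 = x}
instance : TopologicalSpace (PathsFrom X x) := by unfold PathsFrom; infer_instance

/-- The based loop space `Ω_x X`. -/
def LoopsAt : Type := {γ : C(unitInterval, X) // γ 0 = x ∧ γ 1 = x}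
instance : TopologicalSpace (LoopsAt X x) := by unfold LoopsAt; infer_instance

/-- `E(X,x)_j = X^I ∪_{P_x X} (P_x X × S^j)`, the path-space model of the wedge `X ∨_x S^j`. -/
def EXxj : Type :=
  Glue (fun γ : PathsFrom X x => (γ.1 : C(unitInterval, X)))
       (fun γ : PathsFrom X x => ((γ, Sph.pt j) : PathsFrom X x × Sph j))
instance : TopologicalSpace (EXxj X x j) := by unfold EXxj; infer_instance

/-- The projection `E(X,x)_j → X`, evaluation of a path at its endpoint `1`. -/
def EXxjProj : EXxj X x j → X :=
  Glue.desc _ _ (fun γ => γ 1) (fun p => p.1.1 1) (fun _ => rfl)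

/-- The fiber of `E(X,x)_j → X` over the basepoint `x`. -/
def EXxjFiber : Type := {e : EXxj X x j // EXxjProj X x j e = x}
instance : TopologicalSpace (EXxjFiber X x j) := by unfold EXxjFiber; infer_instance

/-- `(Ω_x X)_+ ∧ S^j`, i.e. the quotient `(Ω_x X × S^j)/(Ω_x X × {pt})`. -/
def LoopSmashSph : Type :=
  Collapse {p : LoopsAt X x × Sph j | p.2 = Sph.pt j}
instance : TopologicalSpace (LoopSmashSph X x j) := by unfold LoopSmashSph; infer_instance

/-!
The fiber is the space of paths ending at `x`, glued along `Ω_x X` to `Ω_x X × S^j`, and the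
paths ending at `x` form a contractible piece (retract each path onto its endpoint) which the
smash product collapses. To make this explicit, let `collapseCap c` crush the cap
`{height ≥ c}` of `S^j` to the basepoint and stretch the rest over the sphere. The fiber goes to
`(Ω_x X)_+ ∧ S^j` by collapsing all paths together with the upper hemisphere of the sphere factor
(`collapseCap 0`); conversely `[ℓ, s]` goes to `(ℓ, collapseCap 0 s)` when `s` lies in the lower
hemisphere and to the tail of `ℓ` from time `height s` otherwise. Both composites collapse the
cap of level `-1/2`, and letting the level rise back to `1` gives homotopies to the identity;
on the fiber, points of the cap meanwhile slide along their paths to the endpoint.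
-/

open Set Filter

namespace Sph

variable {j}

def pole (j : ℕ) : EuclideanSpace ℝ (Fin (j + 1)) := EuclideanSpace.single 0 1

def height (s : Sph j) : ℝ := Subtype.val s 0

def horizontal (s : Sph j) : EuclideanSpace ℝ (Fin (j + 1)) := Subtype.val s - height s • pole j

lemma norm_pole : ‖pole j‖ = 1 := by simp [pole]

lemma inner_pole (v : EuclideanSpace ℝ (Fin (j + 1))) : inner ℝ v (pole j) = v 0 := by
  simp [pole, EuclideanSpace.inner_single_right]

lemma pole_apply_zero : pole j 0 = 1 := by simp [pole]

lemma val_pt : Subtype.val (pt j) = pole j := rfl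

lemma height_pt : height (pt j) = 1 := pole_apply_zero

lemma horizontal_pt : horizontal (pt j) = 0 := by
  rw [horizontal, height_pt, one_smul, val_pt, sub_self]

lemma inner_horizontal_pole (s : Sph j) : inner ℝ (horizontal s) (pole j) = 0 := by
  rw [horizontal, inner_sub_left, real_inner_smul_left, inner_pole, inner_pole, pole_apply_zero,
    height, mul_one, sub_self]

lemma norm_horizontal_sq (s : Sph j) : ‖horizontal s‖ ^ 2 = 1 - height s ^ 2 := by
  have hs : ‖Subtype.val s‖ = 1 := mem_sphere_zero_iff_norm.mp s.2
  rw [horizontal, norm_sub_sq_real, real_inner_smul_right, inner_pole, norm_smul, hs, norm_pole,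
    Real.norm_eq_abs, mul_one, sq_abs, height]
  ring

lemma abs_height_le_one (s : Sph j) : |height s| ≤ 1 := by
  have := norm_horizontal_sq s
  exact (sq_le_one_iff_abs_le_one _).mp (by nlinarith [sq_nonneg ‖horizontal s‖])

lemma neg_one_le_height (s : Sph j) : -1 ≤ height s := (abs_le.mp (abs_height_le_one s)).1

lemma height_le_one (s : Sph j) : height s ≤ 1 := (abs_le.mp (abs_height_le_one s)).2

lemma height_eq_one_iff {s : Sph j} : height s = 1 ↔ s = pt j := by
  refine ⟨fun h => Subtype.ext ?_, fun h => h ▸ height_pt⟩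
  have : horizontal s = 0 := by
    rw [← norm_eq_zero, ← sq_eq_zero_iff (a := ‖_‖), norm_horizontal_sq, h]; norm_num
  rw [horizontal, h, one_smul, sub_eq_zero] at this
  exact this

lemma ext_of_sameRay {s t : Sph j} (h : height s = height t)
    (hr : SameRay ℝ (horizontal s) (horizontal t)) : s = t := by
  have hn : ‖horizontal s‖ = ‖horizontal t‖ := by
    rw [← sq_eq_sq₀ (norm_nonneg _) (norm_nonneg _), norm_horizontal_sq, norm_horizontal_sq, h]
  have := hr.eq_of_norm_eq hn
  rw [horizontal, horizontal, h] at this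
  exact Subtype.ext (sub_left_inj.mp this)

@[fun_prop]
lemma continuous_height : Continuous (height (j := j)) :=
  (EuclideanSpace.proj (0 : Fin (j + 1))).continuous.comp continuous_subtype_val

@[fun_prop]
lemma continuous_horizontal : Continuous (horizontal (j := j)) :=
  continuous_subtype_val.sub (continuous_height.smul continuous_const)

def ofHeight (h : ℝ) (w : EuclideanSpace ℝ (Fin (j + 1))) (hw : inner ℝ w (pole j) = 0)
    (hn : ‖w‖ ^ 2 + h ^ 2 = 1) : Sph j :=
  ⟨w + h • pole j, by
    rw [mem_sphere_zero_iff_norm, ← pow_eq_one_iff_of_nonneg (norm_nonneg _) two_ne_zero,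
      norm_add_sq_real, real_inner_smul_right, hw, norm_smul, norm_pole, Real.norm_eq_abs,
      mul_one, sq_abs]
    linarith⟩

lemma height_ofHeight {h : ℝ} {w : EuclideanSpace ℝ (Fin (j + 1))} {hw hn} :
    height (ofHeight h w hw hn) = h := by
  rw [inner_pole] at hw
  simp [height, ofHeight, hw, pole_apply_zero]

lemma horizontal_ofHeight {h : ℝ} {w : EuclideanSpace ℝ (Fin (j + 1))} {hw hn} :
    horizontal (ofHeight h w hw hn) = w := by
  rw [horizontal, height_ofHeight]
  simp [ofHeight]

/-- Cap levels are clamped to `[-1/2, 1]`, which keeps `1 + capLevel c ≥ 1/2`. -/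
def capLevel (c : ℝ) : ℝ := max (min c 1) (-(1 / 2))

lemma capLevel_le_one (c : ℝ) : capLevel c ≤ 1 := max_le (min_le_right c 1) (by norm_num)

lemma neg_half_le_capLevel (c : ℝ) : -(1 / 2) ≤ capLevel c := le_max_right _ _

lemma capLevel_eq {c : ℝ} (h₁ : -(1 / 2) ≤ c) (h₂ : c ≤ 1) : capLevel c = c := by
  rw [capLevel, min_eq_left h₂, max_eq_left h₁]

lemma capLevel_zero : capLevel 0 = 0 := capLevel_eq (by norm_num) zero_le_one

lemma capLevel_neg_half : capLevel (-(1 / 2)) = -(1 / 2) := capLevel_eq le_rfl (by norm_num)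

@[fun_prop]
lemma continuous_capLevel : Continuous capLevel := by unfold capLevel; fun_prop

/-- Heights in `[-1, capLevel c]` are stretched affinely onto `[-1, 1]`; the cap above goes
to `1`. -/
def capHeight (c a : ℝ) : ℝ := min 1 (1 + 2 * (a - capLevel c) / (1 + capLevel c))

/-- The factor by which `collapseCap` rescales the horizontal part: it is
`√((1 - capHeight c a ^ 2) / (1 - a ^ 2))`, simplified so as to be continuous at `a = -1`. -/
def capScale (c a : ℝ) : ℝ := 2 * √(max (capLevel c - a) 0 / ((1 + capLevel c) ^ 2 * (1 - a)))

lemma capHeight_eq_one {c a : ℝ} (h : capLevel c ≤ a) : capHeight c a = 1 :=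
  min_eq_left (by
    have := neg_half_le_capLevel c
    have : 0 ≤ 2 * (a - capLevel c) / (1 + capLevel c) := by apply div_nonneg <;> linarith
    linarith)

lemma capScale_eq_zero {c a : ℝ} (h : capLevel c ≤ a) : capScale c a = 0 := by
  rw [capScale, max_eq_right (by linarith), zero_div, Real.sqrt_zero, mul_zero]

lemma capScale_nonneg (c a : ℝ) : 0 ≤ capScale c a := by unfold capScale; positivity

lemma capScale_sq_mul_add_capHeight_sq (c : ℝ) {a : ℝ} (h : -1 ≤ a) :
    capScale c a ^ 2 * (1 - a ^ 2) + capHeight c a ^ 2 = 1 := by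
  rcases le_or_gt (capLevel c) a with hle | hlt
  · rw [capScale_eq_zero hle, capHeight_eq_one hle]; ring
  have hL := neg_half_le_capLevel c
  have ha : a < 1 := hlt.trans_le (capLevel_le_one c)
  have hd : 0 < (1 + capLevel c) ^ 2 * (1 - a) := mul_pos (by nlinarith) (by linarith)
  rw [capScale, mul_pow, Real.sq_sqrt (div_nonneg (le_max_right _ _) hd.le),
    max_eq_left (by linarith), capHeight, min_eq_right]
  · have : 1 + capLevel c ≠ 0 := by linarith
    have : 1 - a ≠ 0 := by linarith
    field_simp
    ring
  · have : 2 * (a - capLevel c) / (1 + capLevel c) ≤ 0 := by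
      apply div_nonpos_of_nonpos_of_nonneg <;> linarith
    linarith

lemma capScale_le_four (c : ℝ) {a : ℝ} (h : -1 ≤ a) : capScale c a ≤ 4 := by
  rcases le_or_gt (capLevel c) a with hle | hlt
  · rw [capScale_eq_zero hle]; norm_num
  have hL := neg_half_le_capLevel c
  have ha : a < 1 := hlt.trans_le (capLevel_le_one c)
  have hq : max (capLevel c - a) 0 / ((1 + capLevel c) ^ 2 * (1 - a)) ≤ 4 := by
    have h14 : 1 ≤ 4 * (1 + capLevel c) ^ 2 := by nlinarith
    rw [max_eq_left (by linarith), div_le_iff₀ (mul_pos (by nlinarith) (by linarith))]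
    nlinarith [mul_le_mul_of_nonneg_right h14 (sub_nonneg.mpr ha.le), capLevel_le_one c]
  have : √(max (capLevel c - a) 0 / ((1 + capLevel c) ^ 2 * (1 - a))) ≤ 2 :=
    Real.sqrt_le_iff.mpr ⟨by norm_num, by linarith⟩
  rw [capScale]
  linarith

/-- Crushes the cap `{height ≥ capLevel c}` to the basepoint and stretches the rest over the
sphere along meridians. -/
def collapseCap (c : ℝ) (s : Sph j) : Sph j :=
  ofHeight (capHeight c (height s)) (capScale c (height s) • horizontal s)
    (by rw [real_inner_smul_left, inner_horizontal_pole, mul_zero])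
    (by
      rw [norm_smul, mul_pow, norm_horizontal_sq, Real.norm_eq_abs, sq_abs]
      exact capScale_sq_mul_add_capHeight_sq c (neg_one_le_height s))

lemma height_collapseCap (c : ℝ) (s : Sph j) :
    height (collapseCap c s) = capHeight c (height s) := height_ofHeight

lemma horizontal_collapseCap (c : ℝ) (s : Sph j) :
    horizontal (collapseCap c s) = capScale c (height s) • horizontal s := horizontal_ofHeight

lemma collapseCap_eq_pt {c : ℝ} {s : Sph j} (h : capLevel c ≤ height s) :
    collapseCap c s = pt j :=
  height_eq_one_iff.mp (by rw [height_collapseCap, capHeight_eq_one h])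

lemma collapseCap_pt (c : ℝ) : collapseCap c (pt j) = pt j :=
  collapseCap_eq_pt (height_pt ▸ capLevel_le_one c)

lemma collapseCap_one (s : Sph j) : collapseCap 1 s = s := by
  refine ext_of_sameRay ?_ ?_
  · rw [height_collapseCap, capHeight, capLevel_eq (by norm_num) le_rfl,
      min_eq_right (by linarith [height_le_one s])]
    ring
  · rw [horizontal_collapseCap]
    exact (SameRay.refl _).nonneg_smul_left (capScale_nonneg _ _)

lemma collapseCap_collapseCap {c c' c'' : ℝ} {s : Sph j}
    (h : capHeight c' (capHeight c (height s)) = capHeight c'' (height s)) :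
    collapseCap c' (collapseCap c s) = collapseCap c'' s := by
  refine ext_of_sameRay (by simp only [height_collapseCap, h]) ?_
  simp only [horizontal_collapseCap, smul_smul]
  exact ((SameRay.refl _).nonneg_smul_left (mul_nonneg (capScale_nonneg _ _)
    (capScale_nonneg _ _))).nonneg_smul_right (capScale_nonneg _ _)

lemma capHeight_zero (a : ℝ) : capHeight 0 a = min 1 (1 + 2 * a) := by
  rw [capHeight, capLevel_zero]
  ring_nf

lemma capHeight_neg_half (a : ℝ) : capHeight (-(1 / 2)) a = min 1 (3 + 4 * a) := by
  rw [capHeight, capLevel_neg_half]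
  ring_nf

lemma collapseCap_zero_collapseCap_zero (s : Sph j) :
    collapseCap 0 (collapseCap 0 s) = collapseCap (-(1 / 2)) s := by
  refine collapseCap_collapseCap ?_
  rw [capHeight_zero, capHeight_zero, capHeight_neg_half]
  rcases le_total (1 + 2 * height s) 1 with h | h
  · rw [min_eq_right h]; ring_nf
  · rw [min_eq_left h, min_eq_left (by norm_num), min_eq_left (by linarith)]

lemma collapseCap_zero_eq_pt_iff {s : Sph j} : collapseCap 0 s = pt j ↔ 0 ≤ height s := by
  rw [← height_eq_one_iff, height_collapseCap, capHeight_zero, min_eq_left_iff]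
  constructor <;> intro h <;> linarith

lemma continuous_collapseCap : Continuous fun p : ℝ × Sph j => collapseCap p.1 p.2 := by
  have hheight : Continuous fun p : ℝ × Sph j => capHeight p.1 (height p.2) := by
    unfold capHeight
    refine continuous_const.min (continuous_const.add (Continuous.div (by fun_prop) (by fun_prop)
      fun p => ?_))
    linarith [neg_half_le_capLevel p.1]
  have hhor : Continuous fun p : ℝ × Sph j => capScale p.1 (height p.2) • horizontal p.2 := by
    refine continuous_iff_continuousAt.mpr fun ⟨c, s⟩ => ?_
    rcases (height_le_one s).lt_or_eq with hs | hs
    · refine ContinuousAt.smul (f := fun p : ℝ × Sph j => capScale p.1 (height p.2)) ?_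
        (continuous_horizontal.comp continuous_snd).continuousAt
      have hd : (1 + capLevel c) ^ 2 * (1 - height s) ≠ 0 :=
        (mul_pos (by nlinarith [neg_half_le_capLevel c]) (by linarith)).ne'
      unfold capScale
      exact continuousAt_const.mul (Real.continuous_sqrt.continuousAt.comp
        (ContinuousAt.div (by fun_prop) (by fun_prop) hd))
    · -- `capScale ≤ 4` while the horizontal part tends to `0` at the pole
      have h0 : horizontal s = 0 := height_eq_one_iff.mp hs ▸ horizontal_pt
      rw [ContinuousAt, h0, smul_zero]
      refine IsBoundedUnder.smul_tendsto_zero (isBoundedUnder_of ⟨4, fun p => ?_⟩)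
        (h0 ▸ (continuous_horizontal.comp continuous_snd).tendsto (c, s))
      simpa [Real.norm_eq_abs, abs_of_nonneg (capScale_nonneg _ _)] using
        capScale_le_four p.1 (neg_one_le_height p.2)
  exact (hhor.add (hheight.smul continuous_const)).subtype_mk _

@[fun_prop]
lemma _root_.Continuous.collapseCap {Z : Type} [TopologicalSpace Z] {c : Z → ℝ}
    {s : Z → Sph j} (hc : Continuous c) (hs : Continuous s) :
    Continuous fun z => collapseCap (c z) (s z) :=
  continuous_collapseCap.comp (f := fun z => (c z, s z)) (hc.prodMk hs)

end Sph

namespace Glue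

variable {A B C : Type} {f : A → B} {g : A → C}

lemma inl_eq_inr (a : A) : Glue.inl f g (f a) = Glue.inr f g (g a) := Quot.sound (GlueRel.rel a)

@[elab_as_elim]
lemma induction {P : Glue f g → Prop} (inl : ∀ b, P (Glue.inl f g b))
    (inr : ∀ c, P (Glue.inr f g c)) (z : Glue f g) : P z := by
  induction z using Quot.ind with
  | mk y => cases y with
    | inl b => exact inl b
    | inr c => exact inr c

variable {Z : Type} [TopologicalSpace B] [TopologicalSpace C] [TopologicalSpace Z]

lemma continuous_inl : Continuous (Glue.inl f g) := continuous_quot_mk.comp _root_.continuous_inl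

lemma continuous_inr : Continuous (Glue.inr f g) := continuous_quot_mk.comp _root_.continuous_inr

lemma continuous_desc {h : B → Z} {k : C → Z} {hc : ∀ a, h (f a) = k (g a)}
    (hh : Continuous h) (hk : Continuous k) : Continuous (Glue.desc f g h k hc) :=
  continuous_quot_lift _ (hh.sumElim hk)

end Glue

def ContinuousMap.Homotopy.ofPaths {Y Z : Type} [TopologicalSpace Y] [TopologicalSpace Z]
    {f₀ f₁ : C(Y, Z)} (H : C(Y, C(unitInterval, Z))) (h₀ : ∀ y, H y 0 = f₀ y)
    (h₁ : ∀ y, H y 1 = f₁ y) : f₀.Homotopy f₁ where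
  toContinuousMap := H.uncurry.comp ⟨Prod.swap, continuous_swap⟩
  map_zero_left := h₀
  map_one_left := h₁

section PathTail

variable {Y : Type} [TopologicalSpace Y]

/-- `pathTail t η` runs along `η` from time `t` to time `1` (with `t` clamped to `[0, 1]`). -/
def pathTail (t : ℝ) (η : C(unitInterval, Y)) : C(unitInterval, Y) :=
  η.comp ⟨fun u => projIcc 0 1 zero_le_one (t + (1 - t) * u), by fun_prop⟩

lemma pathTail_zero (η : C(unitInterval, Y)) : pathTail 0 η = η := by
  ext u
  simp [pathTail]

lemma pathTail_one (η : C(unitInterval, Y)) : pathTail 1 η = ContinuousMap.const _ (η 1) := by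
  ext u
  simp [pathTail]

lemma pathTail_apply_one (t : ℝ) (η : C(unitInterval, Y)) : pathTail t η 1 = η 1 := by
  simp [pathTail]

lemma continuous_pathTail : Continuous fun p : ℝ × C(unitInterval, Y) => pathTail p.1 p.2 := by
  have hproj : Continuous fun p : ℝ × unitInterval =>
      projIcc (0 : ℝ) 1 zero_le_one (p.1 + (1 - p.1) * p.2) :=
    continuous_projIcc.comp (by fun_prop)
  have : Continuous fun t : ℝ =>
      (⟨fun u => projIcc 0 1 zero_le_one (t + (1 - t) * u), by fun_prop⟩ :
        C(unitInterval, unitInterval)) :=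
    ContinuousMap.continuous_of_continuous_uncurry _ hproj
  exact ContinuousMap.continuous_comp'.comp ((this.comp continuous_fst).prodMk continuous_snd)

@[fun_prop]
lemma Continuous.pathTail {Z : Type} [TopologicalSpace Z] {t : Z → ℝ}
    {η : Z → C(unitInterval, Y)} (ht : Continuous t) (hη : Continuous η) :
    Continuous fun z => pathTail (t z) (η z) :=
  continuous_pathTail.comp (f := fun z => (t z, η z)) (ht.prodMk hη)

end PathTail

section

variable {X x j}

def LoopsAt.toPathsFrom (ℓ : LoopsAt X x) : PathsFrom X x := ⟨ℓ.1, ℓ.2.1⟩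

lemma LoopsAt.continuous_toPathsFrom : Continuous (LoopsAt.toPathsFrom (X := X) (x := x)) :=
  continuous_subtype_val.subtype_mk _

namespace EXxj

abbrev ofPath (η : C(unitInterval, X)) : EXxj X x j :=
  Glue.inl (fun γ : PathsFrom X x => (γ.1 : C(unitInterval, X)))
    (fun γ : PathsFrom X x => ((γ, Sph.pt j) : PathsFrom X x × Sph j)) η

abbrev ofPair (p : PathsFrom X x × Sph j) : EXxj X x j :=
  Glue.inr (fun γ : PathsFrom X x => (γ.1 : C(unitInterval, X)))
    (fun γ : PathsFrom X x => ((γ, Sph.pt j) : PathsFrom X x × Sph j)) p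

lemma ofPath_eq_ofPair (γ : PathsFrom X x) : (ofPath γ.1 : EXxj X x j) = ofPair (γ, Sph.pt j) :=
  Glue.inl_eq_inr γ

lemma continuous_ofPath : Continuous (ofPath : C(unitInterval, X) → EXxj X x j) :=
  Glue.continuous_inl

lemma continuous_ofPair : Continuous (ofPair : PathsFrom X x × Sph j → EXxj X x j) :=
  Glue.continuous_inr

@[elab_as_elim]
lemma induction {P : EXxj X x j → Prop} (path : ∀ η, P (ofPath η))
    (pair : ∀ p, P (ofPair p)) (y : EXxj X x j) : P y :=
  Glue.induction path pair y

def height : EXxj X x j → ℝ :=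
  Glue.desc _ _ (fun _ => 1) (fun p => Sph.height p.2) (fun _ => Sph.height_pt.symm)

/-- `collapseCap 0` crushes the upper hemisphere to the basepoint. -/
def toPathSph : EXxj X x j → C(unitInterval, X) × Sph j :=
  Glue.desc _ _ (fun η => (η, Sph.pt j)) (fun p => (p.1.1, Sph.collapseCap 0 p.2))
    (fun _ => by rw [Sph.collapseCap_pt])

lemma continuous_height : Continuous (height : EXxj X x j → ℝ) :=
  Glue.continuous_desc continuous_const (Sph.continuous_height.comp continuous_snd)

lemma continuous_toPathSph : Continuous (toPathSph : EXxj X x j → _) :=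
  Glue.continuous_desc (continuous_id.prodMk continuous_const)
    ((continuous_subtype_val.comp continuous_fst).prodMk
      (continuous_const.collapseCap continuous_snd))

lemma toPathSph_fst_one (y : EXxj X x j) : (toPathSph y).1 1 = EXxjProj X x j y := by
  induction y using EXxj.induction <;> rfl

lemma toPathSph_snd_eq_pt {y : EXxj X x j} (h : 0 < height y) : (toPathSph y).2 = Sph.pt j := by
  induction y using EXxj.induction with
  | path η => rfl
  | pair p => exact Sph.collapseCap_zero_eq_pt_iff.mpr (le_of_lt h)

lemma height_pos_of_toPathSph_fst {y : EXxj X x j} (h : (toPathSph y).1 0 ≠ x) :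
    0 < height y := by
  induction y using EXxj.induction with
  | path η => exact one_pos
  | pair p => exact absurd p.1.2 h

def pairOrTail (c τ : ℝ) (γ : PathsFrom X x) (s : Sph j) : EXxj X x j :=
  if Sph.height s ≤ Sph.capLevel c then ofPair (γ, Sph.collapseCap c s)
  else ofPath (pathTail τ γ.1)

lemma proj_pairOrTail (c τ : ℝ) (γ : PathsFrom X x) (s : Sph j) :
    EXxjProj X x j (pairOrTail c τ γ s) = γ.1 1 := by
  unfold pairOrTail
  split_ifs
  · rfl
  · exact pathTail_apply_one τ γ.1

lemma pairOrTail_pt {c τ : ℝ} (h : Sph.capLevel c = 1 → τ = 0) (γ : PathsFrom X x) :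
    (pairOrTail c τ γ (Sph.pt j) : EXxj X x j) = ofPath (pathTail τ γ.1) := by
  unfold pairOrTail
  rw [Sph.height_pt]
  split_ifs with hc
  · rw [h (le_antisymm (Sph.capLevel_le_one c) hc), pathTail_zero, Sph.collapseCap_pt,
      ofPath_eq_ofPair]
  · rfl

lemma continuous_pairOrTail {Z : Type} [TopologicalSpace Z] {c τ : Z → ℝ}
    {γ : Z → PathsFrom X x} {s : Z → Sph j} (hc : Continuous c) (hτ : Continuous τ)
    (hγ : Continuous γ) (hs : Continuous s)
    (h : ∀ z, Sph.height (s z) = Sph.capLevel (c z) → τ z = 0) :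
    Continuous fun z => pairOrTail (c z) (τ z) (γ z) (s z) := by
  refine Continuous.if_le (continuous_ofPair.comp (hγ.prodMk (hc.collapseCap hs)))
    (continuous_ofPath.comp (hτ.pathTail (continuous_subtype_val.comp hγ)))
    (Sph.continuous_height.comp hs) (Sph.continuous_capLevel.comp hc) fun z hz => ?_
  rw [Sph.collapseCap_eq_pt hz.ge, h z hz, pathTail_zero]
  exact (ofPath_eq_ofPair _).symm

end EXxj

namespace LoopSmashSph

def mk (q : LoopsAt X x × Sph j) : LoopSmashSph X x j := Glue.inl _ _ q

def base : LoopSmashSph X x j := Glue.inr _ _ PUnit.unit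

lemma mk_pt (ℓ : LoopsAt X x) : mk (ℓ, Sph.pt j) = base :=
  Glue.inl_eq_inr
    (f := fun a : {p : LoopsAt X x × Sph j // p ∈ {p : LoopsAt X x × Sph j | p.2 = Sph.pt j}} =>
      (a : LoopsAt X x × Sph j))
    (g := fun _ => PUnit.unit) ⟨(ℓ, Sph.pt j), rfl⟩

lemma continuous_mk : Continuous (mk : LoopsAt X x × Sph j → LoopSmashSph X x j) :=
  Glue.continuous_inl

@[elab_as_elim]
lemma induction {P : LoopSmashSph X x j → Prop} (mk : ∀ q, P (mk q)) (base : P base)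
    (z : LoopSmashSph X x j) : P z :=
  Glue.induction mk (fun _ => base) z

end LoopSmashSph

namespace EXxjFiber

open Classical in
/-- Collapses the paths of the fiber, together with the upper hemisphere of each sphere factor,
to the basepoint. -/
def toSmash (e : EXxjFiber X x j) : LoopSmashSph X x j :=
  if h : (EXxj.toPathSph e.1).1 0 = x then
    LoopSmashSph.mk (⟨(EXxj.toPathSph e.1).1, h, (EXxj.toPathSph_fst_one e.1).trans e.2⟩,
      (EXxj.toPathSph e.1).2)
  else LoopSmashSph.base

lemma toSmash_eq_mk {e : EXxjFiber X x j} (h : (EXxj.toPathSph e.1).1 0 = x) :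
    toSmash e = LoopSmashSph.mk (⟨(EXxj.toPathSph e.1).1, h,
      (EXxj.toPathSph_fst_one e.1).trans e.2⟩, (EXxj.toPathSph e.1).2) :=
  dif_pos h

lemma toSmash_eq_base {e : EXxjFiber X x j} (h : 0 < EXxj.height e.1) :
    toSmash e = LoopSmashSph.base := by
  unfold toSmash
  split_ifs
  · simp only [EXxj.toPathSph_snd_eq_pt h]
    exact LoopSmashSph.mk_pt _
  · rfl

lemma toSmash_ofPair (p : PathsFrom X x × Sph j) (h : p.1.1 1 = x) :
    toSmash ⟨EXxj.ofPair p, h⟩ =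
      LoopSmashSph.mk (⟨p.1.1, p.1.2, h⟩, Sph.collapseCap 0 p.2) :=
  toSmash_eq_mk (e := ⟨EXxj.ofPair p, h⟩) p.1.2

lemma continuous_toSmash : Continuous (toSmash : EXxjFiber X x j → LoopSmashSph X x j) := by
  have hθ : Continuous fun e : EXxjFiber X x j => EXxj.toPathSph e.1 :=
    EXxj.continuous_toPathSph.comp continuous_subtype_val
  refine continuous_iff_continuousAt.mpr fun e => ?_
  by_cases hstart : (EXxj.toPathSph e.1).1 0 = x
  · -- the preimage of a neighbourhood of `toSmash e` contains a box around the loop of `e`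
    refine fun A hA => mem_map.mpr ?_
    rw [toSmash_eq_mk hstart] at hA
    obtain ⟨u, hu, v, hv, huv⟩ :=
      mem_nhds_prod_iff.mp (LoopSmashSph.continuous_mk.continuousAt.preimage_mem_nhds hA)
    obtain ⟨u', hu', hu'u⟩ := (mem_nhds_induced Subtype.val _ _).mp hu
    filter_upwards [hθ.continuousAt.preimage_mem_nhds (prod_mem_nhds hu' hv)]
      with e' ⟨he'u, he'v⟩
    by_cases hstart' : (EXxj.toPathSph e'.1).1 0 = x
    · rw [Set.mem_preimage, toSmash_eq_mk hstart']
      exact huv ⟨hu'u he'u, he'v⟩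
    · have hpt := EXxj.toPathSph_snd_eq_pt (EXxj.height_pos_of_toPathSph_fst hstart')
      rw [Set.mem_preimage, toSmash_eq_base (EXxj.height_pos_of_toPathSph_fst hstart'),
        ← LoopSmashSph.mk_pt ⟨_, hstart, (EXxj.toPathSph_fst_one e.1).trans e.2⟩]
      exact huv ⟨mem_of_mem_nhds hu, hpt ▸ he'v⟩
  · have hpos := EXxj.height_pos_of_toPathSph_fst hstart
    refine (continuousAt_const (y := LoopSmashSph.base)).congr ?_
    filter_upwards [(EXxj.continuous_height.comp continuous_subtype_val).continuousAt.eventually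
      (lt_mem_nhds hpos)] with e' he'
    exact (toSmash_eq_base he').symm

end EXxjFiber

def sweepLevel (t : ℝ) : ℝ := 1 - 3 / 2 * t

lemma capLevel_sweepLevel (t : unitInterval) : Sph.capLevel (sweepLevel t) = sweepLevel t :=
  Sph.capLevel_eq (by unfold sweepLevel; linarith [t.2.2]) (by unfold sweepLevel; linarith [t.2.1])

/-- The time from which the path is kept, for a point of height `a` at time `t`: it vanishes on
the boundary `a = sweepLevel t` of the cap (where the pair is glued to the whole path) and
equals `t` at the basepoint `a = 1` (matching `pathTail t` on the path part). -/
def tailTime (t a : ℝ) : ℝ := min (max (2 * (a - sweepLevel t)) 0) t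

lemma tailTime_one_right {t : ℝ} (ht : 0 ≤ t) : tailTime t 1 = t := by
  rw [tailTime, sweepLevel, max_eq_left (by linarith), min_eq_right (by linarith)]

lemma tailTime_sweepLevel {t : ℝ} (ht : 0 ≤ t) : tailTime t (sweepLevel t) = 0 := by
  rw [tailTime, sub_self, mul_zero, max_self, min_eq_left ht]

namespace LoopSmashSph

def toFiber : LoopSmashSph X x j → EXxjFiber X x j :=
  Glue.desc _ _
    (fun q => ⟨EXxj.pairOrTail 0 (Sph.height q.2) q.1.toPathsFrom q.2,
      (EXxj.proj_pairOrTail _ _ _ _).trans q.1.2.2⟩)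
    (fun _ => ⟨EXxj.ofPath (ContinuousMap.const _ x), rfl⟩)
    (by
      rintro ⟨⟨ℓ, s⟩, rfl : s = Sph.pt j⟩
      refine Subtype.ext ?_
      simp only [Sph.height_pt]
      rw [EXxj.pairOrTail_pt (by simp [Sph.capLevel_zero]), pathTail_one]
      exact congrArg (fun y => EXxj.ofPath (ContinuousMap.const _ y)) ℓ.2.2)

lemma toFiber_mk (q : LoopsAt X x × Sph j) :
    (toFiber (mk q)).1 = EXxj.pairOrTail 0 (Sph.height q.2) q.1.toPathsFrom q.2 := rfl

lemma continuous_toFiber : Continuous (toFiber : LoopSmashSph X x j → EXxjFiber X x j) :=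
  Glue.continuous_desc
    ((EXxj.continuous_pairOrTail continuous_const (Sph.continuous_height.comp continuous_snd)
      (LoopsAt.continuous_toPathsFrom.comp continuous_fst) continuous_snd
      fun _ hq => hq.trans Sph.capLevel_zero).subtype_mk _)
    continuous_const

lemma toSmash_toFiber_mk (ℓ : LoopsAt X x) (s : Sph j) :
    EXxjFiber.toSmash (toFiber (mk (ℓ, s))) = mk (ℓ, Sph.collapseCap (-(1 / 2)) s) := by
  by_cases hs : Sph.height s ≤ Sph.capLevel 0
  · have : toFiber (mk (ℓ, s)) =
        ⟨EXxj.ofPair (ℓ.toPathsFrom, Sph.collapseCap 0 s), ℓ.2.2⟩ := Subtype.ext (if_pos hs)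
    rw [this]
    exact (EXxjFiber.toSmash_ofPair _ _).trans (by rw [Sph.collapseCap_zero_collapseCap_zero]; rfl)
  · have hpos : 0 < Sph.height s := by rw [Sph.capLevel_zero] at hs; linarith
    rw [EXxjFiber.toSmash_eq_base (by rw [toFiber_mk, EXxj.pairOrTail, if_neg hs]; exact one_pos),
      Sph.collapseCap_eq_pt (by rw [Sph.capLevel_neg_half]; linarith), mk_pt]

def sweep : C(LoopSmashSph X x j, C(unitInterval, LoopSmashSph X x j)) where
  toFun := Glue.desc _ _
    (ContinuousMap.curry ⟨fun p : (LoopsAt X x × Sph j) × unitInterval =>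
      mk (p.1.1, Sph.collapseCap (sweepLevel p.2) p.1.2),
      continuous_mk.comp ((continuous_fst.comp continuous_fst).prodMk
        (Continuous.collapseCap (by unfold sweepLevel; fun_prop) (by fun_prop)))⟩)
    (fun _ => ContinuousMap.const _ base)
    (by
      rintro ⟨⟨ℓ, s⟩, rfl : s = Sph.pt j⟩
      ext t
      exact (congrArg (fun s => mk (ℓ, s)) (Sph.collapseCap_pt _)).trans (mk_pt ℓ))
  continuous_toFun := Glue.continuous_desc (ContinuousMap.curry _).continuous continuous_const

def sweepHomotopy : (ContinuousMap.id (LoopSmashSph X x j)).Homotopy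
    (ContinuousMap.comp ⟨EXxjFiber.toSmash, EXxjFiber.continuous_toSmash⟩
      ⟨toFiber, continuous_toFiber⟩) :=
  .ofPaths sweep
    (fun z => by
      induction z using LoopSmashSph.induction with
      | mk q =>
        show mk (q.1, Sph.collapseCap (sweepLevel 0) q.2) = mk q
        rw [show sweepLevel 0 = 1 by norm_num [sweepLevel], Sph.collapseCap_one]
      | base => rfl)
    (fun z => by
      induction z using LoopSmashSph.induction with
      | mk q =>
        show mk (q.1, Sph.collapseCap (sweepLevel 1) q.2) = EXxjFiber.toSmash (toFiber (mk q))
        rw [show sweepLevel 1 = -(1 / 2) by norm_num [sweepLevel], toSmash_toFiber_mk]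
      | base => exact (EXxjFiber.toSmash_eq_base one_pos).symm)

end LoopSmashSph

namespace EXxj

/-- Points of the growing cap `{height ≥ sweepLevel t}` slide along their paths towards the
endpoint. -/
def sweep : EXxj X x j → C(unitInterval, EXxj X x j) :=
  Glue.desc _ _
    (ContinuousMap.curry ⟨fun p : C(unitInterval, X) × unitInterval => ofPath (pathTail p.2 p.1),
      continuous_ofPath.comp (Continuous.pathTail (by fun_prop) continuous_fst)⟩)
    (ContinuousMap.curry ⟨fun p : (PathsFrom X x × Sph j) × unitInterval =>
      pairOrTail (sweepLevel p.2) (tailTime p.2 (Sph.height p.1.2)) p.1.1 p.1.2,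
      continuous_pairOrTail (by unfold sweepLevel; fun_prop)
        (by unfold tailTime sweepLevel; fun_prop) (by fun_prop) (by fun_prop)
        fun p hp => by rw [capLevel_sweepLevel] at hp; rw [hp, tailTime_sweepLevel p.2.2.1]⟩)
    (fun γ => by
      ext t
      refine (congrArg (fun τ => ofPath (pathTail τ γ.1)) (tailTime_one_right t.2.1).symm).trans
        (pairOrTail_pt (fun h => ?_) γ).symm
      rw [capLevel_sweepLevel, sweepLevel] at h
      rw [show (t : ℝ) = 0 by linarith, tailTime_one_right le_rfl])

lemma continuous_sweep : Continuous (sweep : EXxj X x j → C(unitInterval, EXxj X x j)) :=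
  Glue.continuous_desc (ContinuousMap.curry _).continuous (ContinuousMap.curry _).continuous

lemma sweep_ofPath (η : C(unitInterval, X)) (t : unitInterval) :
    (sweep (ofPath η) t : EXxj X x j) = ofPath (pathTail t η) := rfl

lemma sweep_ofPair (p : PathsFrom X x × Sph j) (t : unitInterval) :
    sweep (ofPair p) t = pairOrTail (sweepLevel t) (tailTime t (Sph.height p.2)) p.1 p.2 := rfl

lemma proj_sweep (y : EXxj X x j) (t : unitInterval) :
    EXxjProj X x j (sweep y t) = EXxjProj X x j y := by
  induction y using EXxj.induction with
  | path η => exact pathTail_apply_one _ η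
  | pair p => exact proj_pairOrTail _ _ _ _

lemma sweep_zero (y : EXxj X x j) : sweep y 0 = y := by
  induction y using EXxj.induction with
  | path η => exact congrArg ofPath (pathTail_zero η)
  | pair p =>
    have h₀ : sweepLevel ((0 : unitInterval) : ℝ) = 1 := by norm_num [sweepLevel]
    rw [sweep_ofPair, pairOrTail, capLevel_sweepLevel, h₀, if_pos (Sph.height_le_one p.2),
      Sph.collapseCap_one]

lemma pairOrTail_collapseCap_zero (γ : PathsFrom X x) (s : Sph j) :
    (pairOrTail 0 (Sph.height (Sph.collapseCap 0 s)) γ (Sph.collapseCap 0 s) : EXxj X x j) =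
      pairOrTail (sweepLevel 1) (tailTime 1 (Sph.height s)) γ s := by
  have hl : sweepLevel 1 = -(1 / 2) := by norm_num [sweepLevel]
  unfold pairOrTail
  rw [Sph.height_collapseCap, Sph.capHeight_zero, Sph.collapseCap_zero_collapseCap_zero, hl,
    Sph.capLevel_zero, Sph.capLevel_neg_half]
  by_cases hs : Sph.height s ≤ -(1 / 2)
  · rw [if_pos hs, if_pos (min_le_of_right_le (by linarith))]
  · rw [if_neg hs, if_neg (not_le.mpr (lt_min one_pos (by linarith))), tailTime, hl,
      max_eq_left (by linarith), min_comm]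
    ring_nf

end EXxj

namespace EXxjFiber

lemma toFiber_toSmash (e : EXxjFiber X x j) :
    (LoopSmashSph.toFiber (toSmash e)).1 = EXxj.sweep e.1 1 := by
  obtain ⟨y, hy⟩ := e
  induction y using EXxj.induction with
  | path η =>
    rw [toSmash_eq_base (e := ⟨_, hy⟩) one_pos, EXxj.sweep_ofPath, Set.Icc.coe_one,
      pathTail_one]
    exact congrArg (fun z => EXxj.ofPath (ContinuousMap.const _ z)) hy.symm
  | pair p =>
    rw [toSmash_ofPair p hy]
    exact EXxj.pairOrTail_collapseCap_zero p.1 p.2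

def sweepHomotopy : (ContinuousMap.id (EXxjFiber X x j)).Homotopy
    (ContinuousMap.comp ⟨LoopSmashSph.toFiber, LoopSmashSph.continuous_toFiber⟩
      ⟨toSmash, continuous_toSmash⟩) where
  toFun p := ⟨EXxj.sweep p.2.1 p.1, (EXxj.proj_sweep _ _).trans p.2.2⟩
  continuous_toFun := (continuous_eval.comp ((EXxj.continuous_sweep.comp
    (continuous_subtype_val.comp continuous_snd)).prodMk continuous_fst)).subtype_mk _
  map_zero_left e := Subtype.ext (EXxj.sweep_zero e.1)
  map_one_left e := Subtype.ext (toFiber_toSmash e).symm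

end EXxjFiber

end

/-- The fiber over the basepoint `x` of the fibration
`E(X,x)_j → X` is homotopy equivalent to the smash product `(Ω_x X)_+ ∧ S^j`. -/
theorem fiber_of_EXxj_homotopyEquiv_loop_smash_sphere :
    Nonempty (ContinuousMap.HomotopyEquiv (EXxjFiber X x j) (LoopSmashSph X x j)) :=
  ⟨{ toFun := ⟨EXxjFiber.toSmash, EXxjFiber.continuous_toSmash⟩
     invFun := ⟨LoopSmashSph.toFiber, LoopSmashSph.continuous_toFiber⟩
     left_inv := ⟨EXxjFiber.sweepHomotopy.symm⟩
     right_inv := ⟨LoopSmashSph.sweepHomotopy.symm⟩ }⟩
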